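/- Let n ≥ 2, let χ be a Dirichlet character modulo n with conductor d, and let s ≥ 0 be an integer. Then ∑ gcd(a-1, b₁, …, b_s, n)·χ(a) = φ(n)·σ_s(n/d), where the sum is over 1 ≤ a, b₁, …, b_s ≤ n with gcd(a,n) = 1. -/

import Mathlib

open Finset DirichletCharacter


/-- CRT decomposition of a unit congruent to 1 mod gcd. -/
lemma crt_unit_decomp {n e f : ℕ} [NeZero n] (he : e ∣ n) (hf : f ∣ n)
    (u : (ZMod n)ˣ) (hu : ZMod.unitsMap ((Nat.gcd_dvd_left e f).trans he) u = 1) :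
    ∃ v w : (ZMod n)ˣ, ZMod.unitsMap he v = 1 ∧ ZMod.unitsMap hf w = 1 ∧ u = v * w := by
  have hn0 : n ≠ 0 := NeZero.ne n
  have he0 : e ≠ 0 := fun h => hn0 (by simpa [h] using he)
  have hf0 : f ≠ 0 := fun h => hn0 (by simpa [h] using hf)
  set a : ℕ := (u : ZMod n).val with ha
  have hau : ((a : ℕ) : ZMod n) = (u : ZMod n) := by simp [ha, ZMod.natCast_val, ZMod.cast_id]
  have hacop : Nat.Coprime a n := ZMod.val_coe_unit_coprime u
  -- a ≡ 1 mod gcd e f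
  have hg : a ≡ 1 [MOD Nat.gcd e f] := by
    have : ((a : ℕ) : ZMod (Nat.gcd e f)) = ((1 : ℕ) : ZMod (Nat.gcd e f)) := by
      have := congrArg (fun x : (ZMod (Nat.gcd e f))ˣ => (x : ZMod (Nat.gcd e f))) hu
      simpa [ZMod.unitsMap, ← hau, map_natCast] using this
    exact (ZMod.natCast_eq_natCast_iff _ _ _).mp this
  obtain ⟨k, hk1, hk2⟩ := Nat.chineseRemainder' hg
  have hke : Nat.Coprime k e := by
    have := Nat.ModEq.gcd_eq hk1
    rw [Nat.Coprime, this]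
    exact Nat.Coprime.coprime_dvd_right he hacop
  have hkf : Nat.Coprime k f := by
    have := Nat.ModEq.gcd_eq hk2
    rw [Nat.Coprime, this]
    simp [Nat.gcd_one_left]
  have hl : Nat.lcm e f ∣ n := Nat.lcm_dvd he hf
  have hkl : Nat.Coprime k (Nat.lcm e f) :=
    Nat.Coprime.coprime_dvd_right (Nat.lcm_dvd_mul e f) (hke.mul_right hkf)
  obtain ⟨w, hw⟩ := ZMod.unitsMap_surjective hl (ZMod.unitOfCoprime k hkl)
  have hel : e ∣ Nat.lcm e f := Nat.dvd_lcm_left e f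
  have hfl : f ∣ Nat.lcm e f := Nat.dvd_lcm_right e f
  have hwe : ((ZMod.unitsMap he w : ZMod e)) = ((k : ℕ) : ZMod e) := by
    have : ZMod.unitsMap he w = ZMod.unitsMap hel (ZMod.unitsMap hl w) := by
      rw [← MonoidHom.comp_apply, ZMod.unitsMap_comp]
    rw [this, hw]
    simp [ZMod.unitsMap, ZMod.coe_unitOfCoprime, map_natCast]
  have hwf : ZMod.unitsMap hf w = 1 := by
    have : ZMod.unitsMap hf w = ZMod.unitsMap hfl (ZMod.unitsMap hl w) := by
      rw [← MonoidHom.comp_apply, ZMod.unitsMap_comp]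
    rw [this, hw]
    ext
    simp only [ZMod.unitsMap, Units.coe_map, MonoidHom.coe_coe, ZMod.coe_unitOfCoprime,
      map_natCast, Units.val_one]
    exact ((ZMod.natCast_eq_natCast_iff _ _ _).mpr hk2).trans (Nat.cast_one)
  refine ⟨u * w⁻¹, w, ?_, hwf, by group⟩
  have hue : ((ZMod.unitsMap he u : ZMod e)) = ((k : ℕ) : ZMod e) := by
    simp only [ZMod.unitsMap, Units.coe_map, MonoidHom.coe_coe, ← hau, map_natCast]
    exact ((ZMod.natCast_eq_natCast_iff _ _ _).mpr hk1).symm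
  have huw : ZMod.unitsMap he u = ZMod.unitsMap he w := by ext; rw [hue, hwe]
  rw [map_mul, map_inv, huw, mul_inv_cancel]

lemma conductor_dvd_of_factorsThrough {n : ℕ} [NeZero n] (χ : DirichletCharacter ℂ n)
    {e : ℕ} (he : e ∣ n) (h : χ.FactorsThrough e) : χ.conductor ∣ e := by
  have hn0 : n ≠ 0 := NeZero.ne n
  set d := χ.conductor with hd
  have hdn : d ∣ n := conductor_dvd_level χ
  have hd0 : d ≠ 0 := conductor_ne_zero χ
  have hgn : Nat.gcd e d ∣ n := (Nat.gcd_dvd_left e d).trans he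
  have hft : χ.FactorsThrough (Nat.gcd e d) := by
    rw [factorsThrough_iff_ker_unitsMap hgn]
    intro u hu
    obtain ⟨v, w, hv, hw, rfl⟩ := crt_unit_decomp he hdn u hu
    have h1 : v ∈ χ.toUnitHom.ker :=
      (factorsThrough_iff_ker_unitsMap he).mp h hv
    have h2 : w ∈ χ.toUnitHom.ker :=
      (factorsThrough_iff_ker_unitsMap hdn).mp (factorsThrough_conductor χ) hw
    exact mul_mem h1 h2
  have h1 : d ≤ Nat.gcd e d := Nat.sInf_le hft
  have h2 : Nat.gcd e d ≤ d := Nat.le_of_dvd (Nat.pos_of_ne_zero hd0) (Nat.gcd_dvd_right e d)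
  have : Nat.gcd e d = d := le_antisymm h2 h1
  rw [← this]
  exact Nat.gcd_dvd_left e d

lemma factorsThrough_of_conductor_dvd {n : ℕ} (χ : DirichletCharacter ℂ n)
    {e : ℕ} (he : e ∣ n) (h : χ.conductor ∣ e) : χ.FactorsThrough e := by
  obtain ⟨hdn, χ₀, hχ₀⟩ := factorsThrough_conductor χ
  exact ⟨he, changeLevel h χ₀, hχ₀.trans (changeLevel_trans χ₀ h he)⟩

lemma char_sum (n : ℕ) (hn : 2 ≤ n) (χ : DirichletCharacter ℂ n) {e : ℕ} (he : e ∣ n) :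
    (Nat.totient e : ℂ) * ∑ a ∈ (Finset.Icc 1 n).filter (fun a => Nat.gcd a n = 1),
      (if e ∣ a - 1 then χ (a : ZMod n) else 0)
    = if χ.conductor ∣ e then (Nat.totient n : ℂ) else 0 := by
  have hn0 : n ≠ 0 := by omega
  haveI : NeZero n := ⟨hn0⟩
  have he0 : e ≠ 0 := fun h => hn0 (by simpa [h] using he)
  haveI : NeZero e := ⟨he0⟩
  -- reindex to units
  have hre : ∑ a ∈ (Finset.Icc 1 n).filter (fun a => Nat.gcd a n = 1),
      (if e ∣ a - 1 then χ (a : ZMod n) else 0)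
      = ∑ u : (ZMod n)ˣ, if ZMod.unitsMap he u = 1 then (χ.toUnitHom u : ℂ) else 0 := by
    refine Finset.sum_bij' (fun a ha => ZMod.unitOfCoprime a (by
        simp only [mem_filter] at ha; exact ha.2))
      (fun u _ => ((u : ZMod n)).val) (fun a ha => Finset.mem_univ _)
      (fun u _ => ?_) (fun a ha => ?_) (fun u _ => ?_) (fun a ha => ?_)
    · -- val ∈ filtered Icc
      have hcop : Nat.Coprime ((u : ZMod n)).val n := ZMod.val_coe_unit_coprime u
      have hlt : ((u : ZMod n)).val < n := ZMod.val_lt _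
      have hne : ((u : ZMod n)).val ≠ 0 := by
        intro h0
        rw [Nat.Coprime, h0, Nat.gcd_zero_left] at hcop
        omega
      simp only [mem_filter, Finset.mem_Icc]
      exact ⟨⟨by omega, by omega⟩, hcop⟩
    · -- left inv
      simp only [mem_filter, Finset.mem_Icc] at ha
      have halt : a < n := by
        rcases Nat.lt_or_ge a n with h | h
        · exact h
        · exfalso; have : a = n := by omega
          rw [this, Nat.gcd_self] at ha; omega
      simp [ZMod.coe_unitOfCoprime, ZMod.val_natCast, Nat.mod_eq_of_lt halt]
    · -- right inv
      apply Units.ext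
      simp [ZMod.coe_unitOfCoprime, ZMod.natCast_val, ZMod.cast_id]
    · -- values agree
      simp only [mem_filter, Finset.mem_Icc] at ha
      obtain ⟨⟨ha1, _⟩, hcop⟩ := ha
      have hcoe : ((ZMod.unitOfCoprime a hcop : (ZMod n)ˣ) : ZMod n) = (a : ZMod n) :=
        ZMod.coe_unitOfCoprime a hcop
      have hcond : ZMod.unitsMap he (ZMod.unitOfCoprime a hcop) = 1 ↔ e ∣ a - 1 := by
        rw [Units.ext_iff]
        simp only [ZMod.unitsMap, Units.coe_map, MonoidHom.coe_coe, hcoe, map_natCast,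
          Units.val_one]
        rw [show (1 : ZMod e) = ((1 : ℕ) : ZMod e) by simp, ZMod.natCast_eq_natCast_iff]
        constructor
        · intro hmod; exact (Nat.modEq_iff_dvd' ha1).mp hmod.symm
        · intro hdvd; exact ((Nat.modEq_iff_dvd' ha1).mpr hdvd).symm
      rw [MulChar.coe_toUnitHom, hcoe]
      by_cases h : e ∣ a - 1 <;> simp [h, hcond]
  rw [hre, ← Finset.sum_filter]
  set K := Finset.univ.filter (fun u : (ZMod n)ˣ => ZMod.unitsMap he u = 1) with hK
  by_cases hc : χ.conductor ∣ e
  · rw [if_pos hc]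
    have hker : (ZMod.unitsMap he).ker ≤ χ.toUnitHom.ker :=
      (factorsThrough_iff_ker_unitsMap he).mp (factorsThrough_of_conductor_dvd χ he hc)
    have hterm : ∀ u ∈ K, ((χ.toUnitHom u : ℂˣ) : ℂ) = 1 := by
      intro u hu
      rw [hK, mem_filter] at hu
      have : u ∈ χ.toUnitHom.ker := hker (MonoidHom.mem_ker.mpr hu.2)
      rw [MonoidHom.mem_ker] at this
      rw [this, Units.val_one]
    rw [Finset.sum_congr rfl hterm, Finset.sum_const, nsmul_eq_mul, mul_one]
    have hcard : Nat.totient e * K.card = Nat.totient n := by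
      have h1 : Nat.card (ZMod n)ˣ
          = Nat.card ((ZMod n)ˣ ⧸ (ZMod.unitsMap he).ker) * Nat.card (ZMod.unitsMap he).ker :=
        Subgroup.card_eq_card_quotient_mul_card_subgroup _
      have h2 : Nat.card ((ZMod n)ˣ ⧸ (ZMod.unitsMap he).ker) = Nat.card (ZMod e)ˣ :=
        Nat.card_congr
          (QuotientGroup.quotientKerEquivOfSurjective _ (ZMod.unitsMap_surjective he)).toEquiv
      have h3 : Nat.card (ZMod.unitsMap he).ker = K.card := by
        rw [Nat.card_eq_fintype_card, Fintype.card_subtype]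
        congr 1
        ext u
        simp [hK, MonoidHom.mem_ker]
      have h4 : Nat.card (ZMod n)ˣ = Nat.totient n := by
        rw [Nat.card_eq_fintype_card, ZMod.card_units_eq_totient]
      have h5 : Nat.card (ZMod e)ˣ = Nat.totient e := by
        rw [Nat.card_eq_fintype_card, ZMod.card_units_eq_totient]
      rw [h2, h3, h4, h5] at h1
      omega
    calc (Nat.totient e : ℂ) * (K.card : ℂ) = ((Nat.totient e * K.card : ℕ) : ℂ) := by push_cast; ring
      _ = (Nat.totient n : ℂ) := by rw [hcard]
  · rw [if_neg hc]
    have hnle : ¬ ((ZMod.unitsMap he).ker ≤ χ.toUnitHom.ker) := fun hle =>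
      hc (conductor_dvd_of_factorsThrough χ he ((factorsThrough_iff_ker_unitsMap he).mpr hle))
    rw [SetLike.le_def] at hnle
    push_neg at hnle
    obtain ⟨u₀, hu₀k, hu₀⟩ := hnle
    rw [MonoidHom.mem_ker] at hu₀k hu₀
    set S := ∑ u ∈ K, ((χ.toUnitHom u : ℂˣ) : ℂ) with hS
    have hshift : ((χ.toUnitHom u₀ : ℂˣ) : ℂ) * S = S := by
      rw [hS, Finset.mul_sum]
      have : ∀ u ∈ K, ((χ.toUnitHom u₀ : ℂˣ) : ℂ) * ((χ.toUnitHom u : ℂˣ) : ℂ)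
          = ((χ.toUnitHom (u₀ * u) : ℂˣ) : ℂ) := by
        intro u _; rw [map_mul, Units.val_mul]
      rw [Finset.sum_congr rfl this]
      refine Finset.sum_bij' (fun u _ => u₀ * u) (fun u _ => u₀⁻¹ * u) ?_ ?_ ?_ ?_ ?_
      · intro u hu
        have h2 : ZMod.unitsMap he u = 1 := (mem_filter.mp hu).2
        show u₀ * u ∈ K
        rw [hK, mem_filter]
        exact ⟨mem_univ _, by rw [map_mul, hu₀k, h2, one_mul]⟩
      · intro u hu
        have h2 : ZMod.unitsMap he u = 1 := (mem_filter.mp hu).2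
        show u₀⁻¹ * u ∈ K
        rw [hK, mem_filter]
        refine ⟨mem_univ _, ?_⟩
        rw [map_mul, map_inv, hu₀k, h2, inv_one, one_mul]
      · intro u _; group
      · intro u _; group
      · intro u _; rfl
    have hzero : (((χ.toUnitHom u₀ : ℂˣ) : ℂ) - 1) * S = 0 := by
      rw [sub_mul, hshift, one_mul, sub_self]
    have hne1 : ((χ.toUnitHom u₀ : ℂˣ) : ℂ) ≠ 1 := by
      intro h
      exact hu₀ (Units.ext (by rw [h, Units.val_one]))
    rcases mul_eq_zero.mp hzero with h | h
    · exact absurd (sub_eq_zero.mp h) hne1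
    · rw [h, mul_zero]

lemma icc_count_multiples (n e : ℕ) :
    ∑ x ∈ Finset.Icc 1 n, (if e ∣ x then 1 else 0) = n / e := by
  have : ∑ x ∈ Finset.Icc 1 n, (if e ∣ x then (1:ℕ) else 0)
      = ((Finset.Icc 1 n).filter (fun x => e ∣ x)).card := by
    rw [← Finset.sum_filter, Finset.sum_const, smul_eq_mul, mul_one]
  rw [this, ← Nat.card_multiples n e]
  apply Finset.card_nbij' (fun a => a - 1) (fun i => i + 1)
  · intro a ha
    simp only [Finset.mem_coe, mem_filter, Finset.mem_Icc] at ha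
    simp only [Finset.mem_coe, mem_filter, Finset.mem_range]
    have h1 : a - 1 + 1 = a := by omega
    exact ⟨by omega, by rw [h1]; exact ha.2⟩
  · intro i hi
    simp only [Finset.mem_coe, mem_filter, Finset.mem_range] at hi
    simp only [Finset.mem_coe, mem_filter, Finset.mem_Icc]
    exact ⟨⟨by omega, by omega⟩, hi.2⟩
  · intro a ha
    simp only [Finset.mem_coe, mem_filter, Finset.mem_Icc] at ha
    show a - 1 + 1 = a
    omega
  · intro i _; show i + 1 - 1 = i; omega

lemma inner_b_sum (s n m : ℕ) (hn : n ≠ 0) (hm : m ∣ n) :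
    ∑ b ∈ Fintype.piFinset (fun _ : Fin s => Finset.Icc 1 n),
      Nat.gcd (Finset.univ.gcd b) m
    = ∑ e ∈ n.divisors, if e ∣ m then e.totient * (n / e) ^ s else 0 := by
  have hm0 : m ≠ 0 := fun h => hn (by simpa [h] using hm)
  have step1 : ∀ b : Fin s → ℕ, Nat.gcd (Finset.univ.gcd b) m
      = ∑ e ∈ n.divisors, if e ∣ m ∧ e ∣ Finset.univ.gcd b then e.totient else 0 := by
    intro b
    rw [← Finset.sum_filter]
    have hdiv : (Nat.gcd (Finset.univ.gcd b) m).divisors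
        = n.divisors.filter (fun e => e ∣ m ∧ e ∣ Finset.univ.gcd b) := by
      ext x
      simp only [Nat.mem_divisors, mem_filter, Nat.dvd_gcd_iff]
      constructor
      · rintro ⟨⟨hx1, hx2⟩, -⟩
        exact ⟨⟨hx2.trans hm, hn⟩, hx2, hx1⟩
      · rintro ⟨⟨-, -⟩, hx2, hx1⟩
        exact ⟨⟨hx1, hx2⟩, fun h => hm0 (by simpa using Nat.eq_zero_of_gcd_eq_zero_right h)⟩
    rw [← hdiv, Nat.sum_totient]
  rw [Finset.sum_congr rfl fun b _ => step1 b, Finset.sum_comm]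
  refine Finset.sum_congr rfl fun e he => ?_
  rw [Nat.mem_divisors] at he
  by_cases hem : e ∣ m
  · simp only [hem, true_and, if_true]
    have he0 : e ≠ 0 := fun h => hn (by simpa [h] using he.1)
    calc ∑ b ∈ Fintype.piFinset (fun _ : Fin s => Finset.Icc 1 n),
          (if e ∣ Finset.univ.gcd b then e.totient else 0)
        = ∑ b ∈ Fintype.piFinset (fun _ : Fin s => Finset.Icc 1 n),
          e.totient * ∏ i : Fin s, (if e ∣ b i then 1 else 0) := by
          refine Finset.sum_congr rfl fun b _ => ?_
          rw [Finset.prod_boole]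
          have : (e ∣ Finset.univ.gcd b) ↔ (∀ i ∈ Finset.univ, e ∣ b i) :=
            Finset.dvd_gcd_iff
          by_cases h : e ∣ Finset.univ.gcd b
          · rw [if_pos h, if_pos (this.mp h), mul_one]
          · rw [if_neg h, if_neg (fun hh => h (this.mpr hh)), mul_zero]
      _ = e.totient * ∑ b ∈ Fintype.piFinset (fun _ : Fin s => Finset.Icc 1 n),
          ∏ i : Fin s, (if e ∣ b i then 1 else 0) := by rw [Finset.mul_sum]
      _ = e.totient * ∏ i : Fin s, ∑ x ∈ Finset.Icc 1 n, (if e ∣ x then 1 else 0) := by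
          rw [Finset.prod_univ_sum]
      _ = e.totient * (n / e) ^ s := by
          rw [Finset.prod_congr rfl fun i _ => icc_count_multiples n e]
          rw [Finset.prod_const, Finset.card_univ, Fintype.card_fin]
  · simp only [hem, false_and, if_false, Finset.sum_const_zero]

lemma divisors_reindex (s n d : ℕ) (hn : n ≠ 0) (hd : d ∣ n) :
    ∑ e ∈ n.divisors.filter (fun e => d ∣ e), (n / e) ^ s
      = ∑ f ∈ (n / d).divisors, f ^ s := by
  have hd0 : d ≠ 0 := fun h => hn (by simpa [h] using hd)
  have hnd0 : n / d ≠ 0 := Nat.div_ne_zero_iff.mpr ⟨hd0, Nat.le_of_dvd (Nat.pos_of_ne_zero hn) hd⟩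
  refine Finset.sum_nbij' (fun e => n / e) (fun f => n / f) ?_ ?_ ?_ ?_ ?_
  · intro e he
    simp only [mem_filter, Nat.mem_divisors] at he
    obtain ⟨⟨hen, -⟩, hde⟩ := he
    rw [Nat.mem_divisors]
    refine ⟨?_, hnd0⟩
    rw [Nat.dvd_div_iff_mul_dvd hd]
    obtain ⟨m, hm⟩ := hde
    obtain ⟨k, hk⟩ := hen
    have he0 : e ≠ 0 := fun h => hn (by simp [hk, h])
    have hne : n / e = k := by
      rw [hk]; exact Nat.mul_div_cancel_left k (Nat.pos_of_ne_zero he0)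
    show d * (n / e) ∣ n
    rw [hne]
    exact ⟨m, by rw [hk, hm]; ring⟩
  · intro f hf
    rw [Nat.mem_divisors] at hf
    obtain ⟨hfd, -⟩ := hf
    have hfn : f ∣ n := hfd.trans (Nat.div_dvd_of_dvd hd)
    have hf0 : f ≠ 0 := fun h => hnd0 (by simpa [h] using hfd)
    simp only [mem_filter, Nat.mem_divisors]
    refine ⟨⟨Nat.div_dvd_of_dvd hfn, hn⟩, ?_⟩
    rw [Nat.dvd_div_iff_mul_dvd hfn, mul_comm, ← Nat.dvd_div_iff_mul_dvd hd]
    exact hfd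
  · intro e he
    simp only [mem_filter, Nat.mem_divisors] at he
    exact Nat.div_div_self he.1.1 hn
  · intro f hf
    rw [Nat.mem_divisors] at hf
    exact Nat.div_div_self (hf.1.trans (Nat.div_dvd_of_dvd hd)) hn
  · intro e _; rfl

/-- Li–Hu–Kim identity: for `n ≥ 2`, `χ` a Dirichlet character mod `n` with
conductor `d`, and `s ≥ 0`, `∑ gcd(a-1, b₁, …, b_s, n) χ(a) = φ(n) σ_s(n/d)`. -/
theorem li_hu_kim_identity (n : ℕ) (hn : 2 ≤ n) (χ : DirichletCharacter ℂ n) (s : ℕ) :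
    ∑ a ∈ (Finset.Icc 1 n).filter (fun a => Nat.gcd a n = 1),
      ∑ b ∈ Fintype.piFinset (fun _ : Fin s => Finset.Icc 1 n),
        (Nat.gcd (a - 1) (Nat.gcd (Finset.univ.gcd b) n) : ℂ) * χ (a : ZMod n)
      = (n.totient : ℂ) * ((∑ d ∈ (n / χ.conductor).divisors, d ^ s : ℕ) : ℂ) := by
  have hn0 : n ≠ 0 := by omega
  haveI : NeZero n := ⟨hn0⟩
  set A := (Finset.Icc 1 n).filter (fun a => Nat.gcd a n = 1) with hA
  set B := Fintype.piFinset (fun _ : Fin s => Finset.Icc 1 n) with hB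
  calc ∑ a ∈ A, ∑ b ∈ B, (Nat.gcd (a - 1) (Nat.gcd (Finset.univ.gcd b) n) : ℂ) * χ (a : ZMod n)
      = ∑ a ∈ A, ∑ e ∈ n.divisors,
          (if e ∣ a - 1 then ((e.totient * (n / e) ^ s : ℕ) : ℂ) else 0) * χ (a : ZMod n) := by
        refine Finset.sum_congr rfl fun a _ => ?_
        have hgcd : ∀ b : Fin s → ℕ, Nat.gcd (a - 1) (Nat.gcd (Finset.univ.gcd b) n)
            = Nat.gcd (Finset.univ.gcd b) (Nat.gcd (a - 1) n) := by
          intro b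
          rw [← Nat.gcd_assoc, Nat.gcd_comm (a - 1) (Finset.univ.gcd b), Nat.gcd_assoc]
        have key : (∑ b ∈ B, Nat.gcd (Finset.univ.gcd b) (Nat.gcd (a - 1) n))
            = ∑ e ∈ n.divisors, if e ∣ a - 1 then e.totient * (n / e) ^ s else 0 := by
          rw [hB, inner_b_sum s n _ hn0 (Nat.gcd_dvd_right _ n)]
          refine Finset.sum_congr rfl fun e he => ?_
          rw [Nat.mem_divisors] at he
          exact if_congr ⟨fun h => h.trans (Nat.gcd_dvd_left _ _),
            fun h => Nat.dvd_gcd h he.1⟩ rfl rfl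
        calc ∑ b ∈ B, (Nat.gcd (a - 1) (Nat.gcd (Finset.univ.gcd b) n) : ℂ) * χ (a : ZMod n)
            = ((∑ b ∈ B, Nat.gcd (Finset.univ.gcd b) (Nat.gcd (a - 1) n) : ℕ) : ℂ)
              * χ (a : ZMod n) := by
              rw [Nat.cast_sum, Finset.sum_mul]
              exact Finset.sum_congr rfl fun b _ => by rw [hgcd b]
          _ = ∑ e ∈ n.divisors,
              (if e ∣ a - 1 then ((e.totient * (n / e) ^ s : ℕ) : ℂ) else 0) * χ (a : ZMod n) := by
              rw [key, Nat.cast_sum, Finset.sum_mul]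
              refine Finset.sum_congr rfl fun e _ => ?_
              rw [apply_ite (fun x : ℕ => (x : ℂ)), Nat.cast_zero]
    _ = ∑ e ∈ n.divisors, (((n / e) ^ s : ℕ) : ℂ) *
          ((e.totient : ℂ) * ∑ a ∈ A, (if e ∣ a - 1 then χ (a : ZMod n) else 0)) := by
        rw [Finset.sum_comm]
        refine Finset.sum_congr rfl fun e _ => ?_
        rw [Finset.mul_sum, Finset.mul_sum]
        refine Finset.sum_congr rfl fun a _ => ?_
        by_cases h : e ∣ a - 1
        · simp only [h, if_true]; push_cast; ring
        · simp only [h, if_false, zero_mul, mul_zero]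
    _ = ∑ e ∈ n.divisors, (((n / e) ^ s : ℕ) : ℂ) *
          (if χ.conductor ∣ e then (n.totient : ℂ) else 0) := by
        refine Finset.sum_congr rfl fun e he => ?_
        rw [Nat.mem_divisors] at he
        rw [char_sum n hn χ he.1]
    _ = ∑ e ∈ n.divisors.filter (fun e => χ.conductor ∣ e),
          (((n / e) ^ s : ℕ) : ℂ) * (n.totient : ℂ) := by
        rw [Finset.sum_filter]
        refine Finset.sum_congr rfl fun e _ => ?_
        by_cases h : χ.conductor ∣ e <;> simp [h]
    _ = (n.totient : ℂ) * ((∑ e ∈ n.divisors.filter (fun e => χ.conductor ∣ e),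
          (n / e) ^ s : ℕ) : ℂ) := by
        rw [Nat.cast_sum, Finset.mul_sum]
        exact Finset.sum_congr rfl fun e _ => by ring
    _ = (n.totient : ℂ) * ((∑ d ∈ (n / χ.conductor).divisors, d ^ s : ℕ) : ℂ) := by
        rw [divisors_reindex s n χ.conductor hn0 (DirichletCharacter.conductor_dvd_level χ)]
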